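/- Let X^1,...,X^k be random vectors of asset returns taking values in ℝ_{>0}^m with any joint distribution, assume all expectations below are well defined and finite, and let (b^{1*},...,b^{k*}) ∈ B^{m×k} be k-log-optimal portfolios. Then for every tuple (b^1,...,b^k) ∈ B^{m×k}, E[∏_{i=1}^k (⟨b^i, X^i⟩ / ⟨b^{i*}, X^i⟩)^{1/k}] ≤ 1. -/

import Mathlib

open MeasureTheory Filter
open Topology

noncomputable section

/-- Scalar product of a portfolio with a return vector. -/
def dot {m : ℕ} (b x : Fin m → ℝ) : ℝ := ∑ j, b j * x j

/-- The portfolio simplex `B^m`. -/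
def simplex (m : ℕ) : Set (Fin m → ℝ) := stdSimplex ℝ (Fin m)

lemma dot_pos {m : ℕ} {b x : Fin m → ℝ} (hb : b ∈ simplex m) (hx : ∀ j, 0 < x j) :
    0 < dot b x := by
  obtain ⟨hb0, hb1⟩ := hb
  have hj : ∃ j ∈ Finset.univ, 0 < b j := by
    by_contra h
    push_neg at h
    have : (∑ j, b j) ≤ 0 := Finset.sum_nonpos (fun j hj => h j hj)
    rw [hb1] at this; linarith
  obtain ⟨j, -, hj⟩ := hj
  exact Finset.sum_pos' (fun i _ => mul_nonneg (hb0 i) (hx i).le)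
    ⟨j, Finset.mem_univ j, mul_pos hj (hx j)⟩

lemma dot_combo {m : ℕ} (a b x : Fin m → ℝ) (s t : ℝ) :
    dot (s • a + t • b) x = s * dot a x + t * dot b x := by
  simp only [dot, Finset.mul_sum, ← Finset.sum_add_distrib]
  refine Finset.sum_congr rfl fun j _ => ?_
  simp [Pi.add_apply, Pi.smul_apply, smul_eq_mul]; ring

lemma log_mix_ge {a b : ℝ} (ha : 0 < a) (hb : 0 < b) {s t : ℝ} (hs : 0 ≤ s) (ht : 0 ≤ t)
    (hst : s + t = 1) :
    s * Real.log a + t * Real.log b ≤ Real.log (s * a + t * b) := by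
  have := strictConcaveOn_log_Ioi.concaveOn.2 (Set.mem_Ioi.2 ha) (Set.mem_Ioi.2 hb) hs ht hst
  simpa [smul_eq_mul] using this

lemma tendsto_mul_log_mix {a b : ℝ} (ha : 0 < a) (hb : 0 < b) :
    Tendsto (fun n : ℕ => ((n : ℝ) + 1) *
        (Real.log ((1 - 1/((n:ℝ)+1)) * a + (1/((n:ℝ)+1)) * b) - Real.log a))
      atTop (𝓝 (b / a - 1)) := by
  have key : Tendsto (fun x : ℝ => x * Real.log (1 + (b/a - 1) / x)) atTop (𝓝 (b/a - 1)) :=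
    Real.tendsto_mul_log_one_add_div_atTop (b/a - 1)
  have h2 : Tendsto (fun n : ℕ => (n : ℝ) + 1) atTop atTop :=
    tendsto_natCast_atTop_atTop.atTop_add tendsto_const_nhds
  refine (key.comp h2).congr fun n => ?_
  have hn : (0:ℝ) < (n:ℝ) + 1 := by positivity
  have harg : (1 - 1/((n:ℝ)+1)) * a + (1/((n:ℝ)+1)) * b = a * (1 + (b/a - 1)/((n:ℝ)+1)) := by
    field_simp
    ring
  have hpos : (0:ℝ) < 1 + (b/a - 1)/((n:ℝ)+1) := by
    have h1 : (0:ℝ) < (1 - 1/((n:ℝ)+1)) * a + (1/((n:ℝ)+1)) * b := by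
      have hle : 1/((n:ℝ)+1) ≤ 1 := by
        rw [div_le_one hn]; linarith
      have h0 : 0 ≤ 1 - 1/((n:ℝ)+1) := by linarith
      have := mul_nonneg h0 ha.le
      have := mul_pos (by positivity : (0:ℝ) < 1/((n:ℝ)+1)) hb
      linarith
    nlinarith [harg]
  simp only [Function.comp_apply, harg, Real.log_mul ha.ne' hpos.ne']
  ring

/-- Lemma 2(b), Kuhn–Tucker condition. If `(b^{1*}, ..., b^{k*})` are
`k`-log-optimal portfolios for random return vectors `X^1, ..., X^k` with values in `ℝ_{>0}^m`,
then `E[∏ i, (⟨b^i, X^i⟩ / ⟨b^{i*}, X^i⟩)^{1/k}] ≤ 1` for every tuple `(b^1, ..., b^k)`. -/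
theorem kLogOptimal_kuhnTucker_geometric
    (m : ℕ) (hm : 2 ≤ m) (k : ℕ) (hk : 1 ≤ k)
    {Ω : Type*} [MeasurableSpace Ω] (P : Measure Ω) [IsProbabilityMeasure P]
    (X : Fin k → Ω → Fin m → ℝ) (hX : ∀ i ω j, 0 < X i ω j)
    (hmeas : ∀ i, Measurable (X i))
    (hint : ∀ B : Fin k → Fin m → ℝ, (∀ i, B i ∈ simplex m) →
      Integrable (fun ω => ∑ i, Real.log (dot (B i) (X i ω))) P)
    (Bstar : Fin k → Fin m → ℝ) (hBstar : ∀ i, Bstar i ∈ simplex m)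
    (hopt : ∀ B : Fin k → Fin m → ℝ, (∀ i, B i ∈ simplex m) →
      (∫ ω, ∑ i, Real.log (dot (B i) (X i ω)) ∂P) ≤
        ∫ ω, ∑ i, Real.log (dot (Bstar i) (X i ω)) ∂P)
    (B : Fin k → Fin m → ℝ) (hB : ∀ i, B i ∈ simplex m)
    (hint' : Integrable
      (fun ω => ∏ i, (dot (B i) (X i ω) / dot (Bstar i) (X i ω)) ^ ((k : ℝ)⁻¹)) P) :
    (∫ ω, ∏ i, (dot (B i) (X i ω) / dot (Bstar i) (X i ω)) ^ ((k : ℝ)⁻¹) ∂P) ≤ 1 := by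
  classical
  have hk0 : (0:ℝ) < k := by exact_mod_cast hk
  have hdpos : ∀ i ω, 0 < dot (Bstar i) (X i ω) := fun i ω => dot_pos (hBstar i) (hX i ω)
  have hepos : ∀ i ω, 0 < dot (B i) (X i ω) := fun i ω => dot_pos (hB i) (hX i ω)
  -- measurability of dot products
  have hmeas_dot : ∀ (b : Fin m → ℝ) (i : Fin k), Measurable (fun ω => dot b (X i ω)) := by
    intro b i
    simp only [dot]
    exact Finset.measurable_sum _
      (fun j _ => measurable_const.mul ((measurable_pi_apply j).comp (hmeas i)))
  -- the mixtures
  set lam : ℕ → ℝ := fun n => 1/((n:ℝ)+1) with hlam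
  have hlam_pos : ∀ n, 0 < lam n := fun n => by positivity
  have hlam_le : ∀ n, lam n ≤ 1 := fun n => by
    rw [hlam]
    rw [div_le_one (by positivity)]
    simp
  set Bmix : ℕ → Fin k → Fin m → ℝ := fun n i => (1 - lam n) • Bstar i + lam n • B i with hBmix
  have hmix : ∀ n i, Bmix n i ∈ simplex m := fun n i =>
    (convex_stdSimplex ℝ (Fin m)) (hBstar i) (hB i)
      (by linarith [hlam_le n]) (hlam_pos n).le (by ring)
  have hdot_mix : ∀ n i ω, dot (Bmix n i) (X i ω)
      = (1 - lam n) * dot (Bstar i) (X i ω) + lam n * dot (B i) (X i ω) :=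
    fun n i ω => dot_combo _ _ _ _ _
  -- the difference quotients q n
  set q : ℕ → Ω → ℝ := fun n ω => ((n:ℝ)+1) *
    ((∑ i, Real.log (dot (Bmix n i) (X i ω))) - ∑ i, Real.log (dot (Bstar i) (X i ω))) with hq
  have hq_int : ∀ n, Integrable (q n) P := fun n =>
    ((hint (Bmix n) (hmix n)).sub (hint Bstar hBstar)).const_mul _
  have hq_integral : ∀ n, (∫ ω, q n ω ∂P) ≤ 0 := by
    intro n
    have h1 : (∫ ω, q n ω ∂P) = ((n:ℝ)+1) *
        ((∫ ω, ∑ i, Real.log (dot (Bmix n i) (X i ω)) ∂P) -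
          ∫ ω, ∑ i, Real.log (dot (Bstar i) (X i ω)) ∂P) := by
      simp only [hq]
      rw [integral_const_mul, integral_sub (hint (Bmix n) (hmix n)) (hint Bstar hBstar)]
    rw [h1]
    have h2 := hopt (Bmix n) (hmix n)
    nlinarith [h2, (by positivity : (0:ℝ) < (n:ℝ)+1)]
  have hq_sum : ∀ n ω, q n ω = ∑ i, ((n:ℝ)+1) *
      (Real.log (dot (Bmix n i) (X i ω)) - Real.log (dot (Bstar i) (X i ω))) := by
    intro n ω
    simp only [hq, Finset.mul_sum, Finset.sum_sub_distrib, mul_sub]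
  -- S : integrable lower bound for all q n
  set S : Ω → ℝ := fun ω => (∑ i, Real.log (dot (B i) (X i ω))) -
    ∑ i, Real.log (dot (Bstar i) (X i ω)) with hS
  have hS_int : Integrable S P := (hint B hB).sub (hint Bstar hBstar)
  have hS_sum : ∀ ω, S ω = ∑ i,
      (Real.log (dot (B i) (X i ω)) - Real.log (dot (Bstar i) (X i ω))) := by
    intro ω; simp only [hS, Finset.sum_sub_distrib]
  have hqS : ∀ n ω, S ω ≤ q n ω := by
    intro n ω
    rw [hq_sum, hS_sum]
    refine Finset.sum_le_sum fun i _ => ?_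
    have key := log_mix_ge (hdpos i ω) (hepos i ω)
      (s := 1 - lam n) (t := lam n) (by linarith [hlam_le n]) (hlam_pos n).le (by ring)
    rw [← hdot_mix] at key
    have hl : lam n * ((n:ℝ)+1) = 1 := by
      rw [hlam]; field_simp
    have h6 : lam n * (Real.log (dot (B i) (X i ω)) - Real.log (dot (Bstar i) (X i ω)))
        ≤ Real.log (dot (Bmix n i) (X i ω)) - Real.log (dot (Bstar i) (X i ω)) := by
      nlinarith [key]
    have h7 := mul_le_mul_of_nonneg_left h6 (by positivity : (0:ℝ) ≤ (n:ℝ)+1)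
    rw [← mul_assoc, mul_comm ((n:ℝ)+1) (lam n), hl, one_mul] at h7
    linarith
  -- the pointwise limit L
  set L : Ω → ℝ := fun ω => ∑ i, (dot (B i) (X i ω) / dot (Bstar i) (X i ω) - 1) with hL
  have hL_meas : Measurable L := by
    apply Finset.measurable_sum
    intro i _
    exact ((hmeas_dot (B i) i).div (hmeas_dot (Bstar i) i)).sub measurable_const
  have hq_tendsto : ∀ ω, Tendsto (fun n => q n ω) atTop (𝓝 (L ω)) := by
    intro ω
    have h := tendsto_finset_sum (Finset.univ : Finset (Fin k))
      (f := fun i (n : ℕ) => ((n:ℝ)+1) *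
        (Real.log (dot (Bmix n i) (X i ω)) - Real.log (dot (Bstar i) (X i ω))))
      (fun i _ => by
        have h0 := tendsto_mul_log_mix (hdpos i ω) (hepos i ω)
        refine h0.congr fun n => ?_
        simp only [hdot_mix, hlam])
    exact h.congr fun n => (hq_sum n ω).symm
  have hSL : ∀ ω, S ω ≤ L ω := by
    intro ω
    rw [hS_sum, hL]
    refine Finset.sum_le_sum fun i _ => ?_
    rw [← Real.log_div (hepos i ω).ne' (hdpos i ω).ne']
    exact Real.log_le_sub_one_of_pos (div_pos (hepos i ω) (hdpos i ω))
  -- target function F and AM-GM bound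
  set F : Ω → ℝ := fun ω => ∏ i, (dot (B i) (X i ω) / dot (Bstar i) (X i ω)) ^ ((k : ℝ)⁻¹)
    with hF
  have hF_meas : Measurable F := by
    apply Finset.measurable_prod
    intro i _
    exact (Real.continuous_rpow_const (by positivity : (0:ℝ) ≤ (k:ℝ)⁻¹)).measurable.comp
      ((hmeas_dot (B i) i).div (hmeas_dot (Bstar i) i))
  have hF_pos : ∀ ω, 0 < F ω := fun ω =>
    Finset.prod_pos fun i _ =>
      Real.rpow_pos_of_pos (div_pos (hepos i ω) (hdpos i ω)) _
  have hFL : ∀ ω, F ω ≤ 1 + L ω / k := by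
    intro ω
    have hgm := Real.geom_mean_le_arith_mean_weighted Finset.univ (fun _ : Fin k => (k:ℝ)⁻¹)
      (fun i => dot (B i) (X i ω) / dot (Bstar i) (X i ω))
      (fun i _ => inv_nonneg.2 hk0.le)
      (by
        show (∑ _i : Fin k, (k:ℝ)⁻¹) = 1
        rw [Finset.sum_const, Finset.card_univ, Fintype.card_fin, nsmul_eq_mul]
        field_simp)
      (fun i _ => le_of_lt (div_pos (hepos i ω) (hdpos i ω)))
    have hrhs : (∑ i : Fin k, (k:ℝ)⁻¹ * (dot (B i) (X i ω) / dot (Bstar i) (X i ω)))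
        = 1 + L ω / k := by
      simp only [hL]
      rw [← Finset.mul_sum, Finset.sum_sub_distrib, Finset.sum_const, Finset.card_univ,
        Fintype.card_fin, nsmul_eq_mul, mul_one]
      field_simp
      ring
    rw [hF]
    calc (∏ i, (dot (B i) (X i ω) / dot (Bstar i) (X i ω)) ^ ((k : ℝ)⁻¹))
        ≤ ∑ i : Fin k, (k:ℝ)⁻¹ * (dot (B i) (X i ω) / dot (Bstar i) (X i ω)) := hgm
      _ = 1 + L ω / k := hrhs
  -- integrability of truncations of F
  have hminF_int : ∀ C : ℝ, Integrable (fun ω => min (F ω) C) P := by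
    intro C
    refine (hint'.add (integrable_const |C|)).mono'
      ((hF_meas.min measurable_const).aestronglyMeasurable) ?_
    refine Eventually.of_forall fun ω => ?_
    rw [Real.norm_eq_abs, abs_le]
    constructor
    · have h1 : min (0:ℝ) C ≤ min (F ω) C := min_le_min (hF_pos ω).le le_rfl
      have h2 : -|C| ≤ min (0:ℝ) C := by
        rcases le_total (0:ℝ) C with h | h
        · rw [min_eq_left h]; exact neg_nonpos.2 (abs_nonneg C)
        · rw [min_eq_right h]; exact neg_abs_le C
      have := (hF_pos ω).le
      show -(F ω + |C|) ≤ min (F ω) C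
      linarith
    · have h3 := min_le_left (F ω) C
      have := (hF_pos ω).le
      have := abs_nonneg C
      show min (F ω) C ≤ F ω + |C|
      linarith
  -- key step: for every constant C the expectation of min F C is at most 1
  have key : ∀ C : ℝ, (∫ ω, min (F ω) C ∂P) ≤ 1 := by
    intro C
    set g : ℕ → Ω → ℝ := fun n ω => min (1 + q n ω / k) C with hg
    set glim : Ω → ℝ := fun ω => min (1 + L ω / k) C with hglim
    set bound : Ω → ℝ := fun ω => |1 + S ω / k| + |C| with hbound
    have hbound_int : Integrable bound P :=
      ((((integrable_const (1:ℝ)).add (hS_int.div_const _)).abs).add (integrable_const _))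
    have hgle : ∀ n ω, ‖g n ω‖ ≤ bound ω := by
      intro n ω
      rw [Real.norm_eq_abs, abs_le]
      have hSq : 1 + S ω / k ≤ 1 + q n ω / k := by
        have := hqS n ω
        gcongr
      constructor
      · have h1 : min (1 + S ω / k) C ≤ g n ω := min_le_min hSq le_rfl
        have h2 : -(|1 + S ω / k| + |C|) ≤ min (1 + S ω / k) C := by
          rcases le_total (1 + S ω / k) C with h | h
          · rw [min_eq_left h]
            have := neg_abs_le (1 + S ω / k); have := abs_nonneg C; linarith
          · rw [min_eq_right h]
            have := neg_abs_le C; have := abs_nonneg (1 + S ω / k); linarith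
        simp only [hbound]
        linarith
      · have h3 : g n ω ≤ C := min_le_right _ _
        have := le_abs_self C
        have := abs_nonneg (1 + S ω / k)
        simp only [hbound]
        linarith
    have hgmeas : ∀ n, AEStronglyMeasurable (g n) P := by
      intro n
      have hqm : Measurable (q n) := by
        apply Measurable.const_mul
        exact (Finset.measurable_sum _ fun i _ =>
          Real.measurable_log.comp (hmeas_dot (Bmix n i) i)).sub
          (Finset.measurable_sum _ fun i _ =>
            Real.measurable_log.comp (hmeas_dot (Bstar i) i))
      exact ((measurable_const.add (hqm.div_const _)).min measurable_const).aestronglyMeasurable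
    have hg_int : ∀ n, Integrable (g n) P := fun n =>
      hbound_int.mono' (hgmeas n) (Eventually.of_forall (hgle n))
    have hgtend : ∀ ω, Tendsto (fun n => g n ω) atTop (𝓝 (glim ω)) := fun ω =>
      (tendsto_const_nhds.add ((hq_tendsto ω).div_const _)).min tendsto_const_nhds
    have hDCT := tendsto_integral_of_dominated_convergence bound hgmeas hbound_int
      (fun n => Eventually.of_forall (hgle n)) (Eventually.of_forall hgtend)
    have hglim_int : Integrable glim P := by
      refine hbound_int.mono'
        (((measurable_const.add (hL_meas.div_const _)).min measurable_const).aestronglyMeasurable)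
        (Eventually.of_forall fun ω => ?_)
      rw [Real.norm_eq_abs, abs_le]
      have hSq : 1 + S ω / k ≤ 1 + L ω / k := by
        have := hSL ω
        gcongr
      constructor
      · have h1 : min (1 + S ω / k) C ≤ glim ω := min_le_min hSq le_rfl
        have h2 : -(|1 + S ω / k| + |C|) ≤ min (1 + S ω / k) C := by
          rcases le_total (1 + S ω / k) C with h | h
          · rw [min_eq_left h]
            have := neg_abs_le (1 + S ω / k); have := abs_nonneg C; linarith
          · rw [min_eq_right h]
            have := neg_abs_le C; have := abs_nonneg (1 + S ω / k); linarith
        simp only [hbound]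
        linarith
      · have h3 : glim ω ≤ C := min_le_right _ _
        have := le_abs_self C
        have := abs_nonneg (1 + S ω / k)
        simp only [hbound]
        linarith
    have h1 : (∫ ω, min (F ω) C ∂P) ≤ ∫ ω, glim ω ∂P :=
      integral_mono (hminF_int C) hglim_int (fun ω => min_le_min (hFL ω) le_rfl)
    have h2 : (∫ ω, glim ω ∂P) ≤ 1 := by
      refine le_of_tendsto hDCT (Eventually.of_forall fun n => ?_)
      have h3 : (∫ ω, g n ω ∂P) ≤ ∫ ω, (1 + q n ω / k) ∂P :=
        integral_mono (hg_int n) ((integrable_const 1).add ((hq_int n).div_const _))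
          (fun ω => min_le_left _ _)
      have h4 : (∫ ω, (1 + q n ω / k) ∂P) = 1 + (∫ ω, q n ω ∂P) / k := by
        rw [integral_add (integrable_const 1) ((hq_int n).div_const _), integral_const,
          integral_div]
        simp
      rw [h4] at h3
      have h5 : (∫ ω, q n ω ∂P) / k ≤ 0 := div_nonpos_of_nonpos_of_nonneg (hq_integral n) hk0.le
      linarith
    linarith
  -- monotone convergence to remove the truncation
  have hmin_mono : ∀ ω, Monotone fun n : ℕ => min (F ω) (n:ℝ) := fun ω a b hab =>
    min_le_min le_rfl (by exact_mod_cast hab)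
  have hmin_tend : ∀ ω, Tendsto (fun n : ℕ => min (F ω) (n:ℝ)) atTop (𝓝 (F ω)) := by
    intro ω
    obtain ⟨N, hN⟩ := exists_nat_ge (F ω)
    have hconst : Tendsto (fun _ : ℕ => F ω) atTop (𝓝 (F ω)) := tendsto_const_nhds
    refine hconst.congr' ?_
    filter_upwards [eventually_ge_atTop N] with n hn
    exact (min_eq_left (hN.trans (by exact_mod_cast hn))).symm
  have hfinal := integral_tendsto_of_tendsto_of_monotone
    (fun n => hminF_int (n:ℝ)) hint' (Eventually.of_forall hmin_mono)
    (Eventually.of_forall hmin_tend)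
  exact le_of_tendsto hfinal (Eventually.of_forall fun n => key (n:ℝ))
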